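/- arXiv:0709.2107 — 4 statements merged into one kernel-verified Lean document; each statement's English description precedes it below -/
import Mathlib

section
/- For any A > 0 and Q ∈ ℝ, the function κ(s) = A / (A²(s+Q)² + 1) satisfies the differential equation 4κ⁴ + 2κκ'' − 3(κ')² = 0. -/
/-!
Writing `κ = m / u`, the expression `4κ⁴ + 2κκ'' − 3κ'²` equals `m² (4m² + u'² − 2uu'') / u⁴`.
For a quadratic `u = b (s + Q)² + c` the bracket is the constant `4m² − 4bc`, which vanishes
when `m² = bc`; the catenary curvature is the case `m = A`, `b = A²`, `c = 1`.
-/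

section

variable {𝕜 : Type*} [NontriviallyNormedField 𝕜]

theorem HasDerivAt.const_div {u : 𝕜 → 𝕜} {u' x : 𝕜} (m : 𝕜) (hu : HasDerivAt u u' x)
    (h0 : u x ≠ 0) : HasDerivAt (fun s => m / u s) (-m * u' / u x ^ 2) x :=
  ((hasDerivAt_const x m).div hu h0).congr_deriv (by ring)

theorem ode_expr_const_div {u u' u'' : 𝕜 → 𝕜} (m : 𝕜)
    (hu : ∀ s, HasDerivAt u (u' s) s) (hu' : ∀ s, HasDerivAt u' (u'' s) s)
    (h0 : ∀ s, u s ≠ 0) (s : 𝕜) :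
    4 * (m / u s) ^ 4 + 2 * (m / u s) * deriv (deriv fun s => m / u s) s
        - 3 * deriv (fun s => m / u s) s ^ 2
      = m ^ 2 * (4 * m ^ 2 + u' s ^ 2 - 2 * u s * u'' s) / u s ^ 4 := by
  have hd : deriv (fun s => m / u s) = fun s => -m * u' s / u s ^ 2 :=
    funext fun s => ((hu s).const_div m (h0 s)).deriv
  have hdd : HasDerivAt (fun s => -m * u' s / u s ^ 2)
      ((-m * u'' s * u s ^ 2 - -m * u' s * (2 * u s * u' s)) / (u s ^ 2) ^ 2) s :=
    ((hu' s).const_mul (-m)).div (((hu s).pow 2).congr_deriv (by ring)) (pow_ne_zero 2 (h0 s))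
  rw [hd, hdd.deriv]
  have := h0 s
  field_simp
  ring

theorem ode_expr_const_div_quadratic_eq_zero {m b c Q : 𝕜} (hmbc : m ^ 2 = b * c)
    (h0 : ∀ s, b * (s + Q) ^ 2 + c ≠ 0) (s : 𝕜) :
    4 * (m / (b * (s + Q) ^ 2 + c)) ^ 4
        + 2 * (m / (b * (s + Q) ^ 2 + c)) * deriv (deriv fun s => m / (b * (s + Q) ^ 2 + c)) s
        - 3 * deriv (fun s => m / (b * (s + Q) ^ 2 + c)) s ^ 2 = 0 := by
  have hu : ∀ s, HasDerivAt (fun s => b * (s + Q) ^ 2 + c) (2 * b * (s + Q)) s := fun s =>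
    ((((hasDerivAt_id' s).add_const Q).pow 2).const_mul b |>.add_const c).congr_deriv (by ring)
  have hu' : ∀ s, HasDerivAt (fun s => 2 * b * (s + Q)) (2 * b) s := fun s =>
    (((hasDerivAt_id' s).add_const Q).const_mul (2 * b)).congr_deriv (mul_one _)
  rw [ode_expr_const_div m hu hu' h0 s]
  have hbracket : 4 * m ^ 2 + (2 * b * (s + Q)) ^ 2 - 2 * (b * (s + Q) ^ 2 + c) * (2 * b) = 0 := by
    linear_combination 4 * hmbc
  rw [hbracket, mul_zero, zero_div]

end

theorem stmt_2_general (A Q : ℝ) (κ : ℝ → ℝ)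
    (hκ : κ = fun s => A / (A ^ 2 * (s + Q) ^ 2 + 1)) :
    ∀ s, 4 * (κ s) ^ 4 + 2 * κ s * deriv (deriv κ) s - 3 * (deriv κ s) ^ 2 = 0 := by
  subst hκ
  exact ode_expr_const_div_quadratic_eq_zero (by ring) fun s => by positivity

/-- For `A > 0`, `Q ∈ ℝ`, the function `κ(s) = A / (A²(s+Q)² + 1)`
satisfies `4κ⁴ + 2κκ'' − 3(κ')² = 0`. -/
theorem stmt_2 (A Q : ℝ) (hA : 0 < A) (κ : ℝ → ℝ)
    (hκ : κ = fun s => A / (A ^ 2 * (s + Q) ^ 2 + 1)) :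
    ∀ s, 4 * (κ s) ^ 4 + 2 * κ s * deriv (deriv κ) s - 3 * (deriv κ s) ^ 2 = 0 :=
  stmt_2_general A Q κ hκ
end

section
/- Every positive solution κ of the differential equation 4κ⁴ + 2κκ'' − 3(κ')² = 0 on ℝ is of the form κ(s) = A / (A²(s+Q)² + 1) for some constants A > 0 and Q ∈ ℝ. -/
/-- Every positive smooth solution of `4κ⁴ + 2κκ'' − 3(κ')² = 0` on `ℝ`
is of the form `κ(s) = A / (A²(s+Q)² + 1)` for some `A > 0` and `Q ∈ ℝ`. -/
theorem stmt_3 (κ : ℝ → ℝ) (hκ : ContDiff ℝ (⊤ : ℕ∞) κ) (hpos : ∀ s, 0 < κ s)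
    (hode : ∀ s, 4 * (κ s) ^ 4 + 2 * κ s * deriv (deriv κ) s - 3 * (deriv κ s) ^ 2 = 0) :
    ∃ A Q : ℝ, 0 < A ∧ ∀ s, κ s = A / (A ^ 2 * (s + Q) ^ 2 + 1) := by
  have hne : ∀ s, κ s ≠ 0 := fun s => (hpos s).ne'
  have hκ1 : Differentiable ℝ κ := hκ.differentiable (by simp)
  have hki : ContDiff ℝ ((⊤ : ℕ∞) : WithTop ℕ∞) κ := hκ.of_le (by simp)
  have hκ2d : Differentiable ℝ (deriv κ) :=
    ((contDiff_infty_iff_deriv.mp hki).2).differentiable (by norm_num)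
  set φ : ℝ → ℝ := fun s => (κ s)⁻¹ with hφdef
  -- first derivative of φ
  have h1 : ∀ s, HasDerivAt φ (-deriv κ s / κ s ^ 2) s := fun s =>
    ((hκ1 s).hasDerivAt).inv (hne s)
  have hdφ : deriv φ = fun s => -deriv κ s / κ s ^ 2 := funext fun s => (h1 s).deriv
  -- second derivative of φ, simplified using the ODE
  have h2 : ∀ s, HasDerivAt (deriv φ)
      ((deriv κ s ^ 2 + 4 * κ s ^ 4) / (2 * κ s ^ 3)) s := by
    intro s
    have hc : HasDerivAt (fun t => -deriv κ t) (-deriv (deriv κ) s) s :=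
      ((hκ2d s).hasDerivAt).neg
    have hd : HasDerivAt (fun t => κ t ^ 2) ((2 : ℕ) * κ s ^ (2 - 1) * deriv κ s) s :=
      ((hκ1 s).hasDerivAt).pow 2
    have hne2 : κ s ^ 2 ≠ 0 := pow_ne_zero _ (hne s)
    have H := hc.div hd hne2
    rw [hdφ]
    refine H.congr_deriv ?_
    symm
    have hο := hode s
    have hk := hne s
    field_simp
    linear_combination κ s * hο
  have hddφ : deriv (deriv φ) = fun s => (deriv κ s ^ 2 + 4 * κ s ^ 4) / (2 * κ s ^ 3) :=
    funext fun s => (h2 s).deriv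
  -- third derivative of φ vanishes
  have h3 : ∀ s, HasDerivAt (deriv (deriv φ)) 0 s := by
    intro s
    have hu : HasDerivAt (fun t => deriv κ t ^ 2 + 4 * κ t ^ 4)
        ((2 : ℕ) * deriv κ s ^ (2 - 1) * deriv (deriv κ) s
          + 4 * ((4 : ℕ) * κ s ^ (4 - 1) * deriv κ s)) s :=
      (((hκ2d s).hasDerivAt).pow 2).add ((((hκ1 s).hasDerivAt).pow 4).const_mul 4)
    have hv : HasDerivAt (fun t => 2 * κ t ^ 3) (2 * ((3 : ℕ) * κ s ^ (3 - 1) * deriv κ s)) s :=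
      (((hκ1 s).hasDerivAt).pow 3).const_mul 2
    have hposs := hpos s
    have hne3 : (2 : ℝ) * κ s ^ 3 ≠ 0 := by positivity
    have H := hu.div hv hne3
    rw [hddφ]
    refine H.congr_deriv ?_
    symm
    have hο := hode s
    have hk := hne s
    field_simp
    linear_combination (-deriv κ s * κ s ^ 2) * hο
  -- hence φ'' is constant
  have hC2 : ∀ s, deriv (deriv φ) s = deriv (deriv φ) 0 := fun s =>
    is_const_of_deriv_eq_zero (fun t => (h3 t).differentiableAt) (fun t => (h3 t).deriv) s 0
  set a2 : ℝ := deriv (deriv φ) 0 with ha2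
  set b : ℝ := deriv φ 0 with hb
  set c : ℝ := φ 0 with hc0
  -- φ' s = a2 * s + b
  have hC1 : ∀ s, deriv φ s = a2 * s + b := by
    have key : ∀ s, HasDerivAt (fun t => deriv φ t - a2 * t) 0 s := by
      intro s
      have hd2 : HasDerivAt (deriv φ) a2 s := by
        have h := h2 s
        have hv : (deriv κ s ^ 2 + 4 * κ s ^ 4) / (2 * κ s ^ 3) = a2 := by
          rw [← (h2 s).deriv]; exact hC2 s
        rwa [hv] at h
      exact (hd2.sub ((hasDerivAt_id s).const_mul a2)).congr_deriv (by simp)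
    intro s
    have := is_const_of_deriv_eq_zero (fun t => (key t).differentiableAt)
      (fun t => (key t).deriv) s 0
    simp only [mul_zero, sub_zero] at this
    linarith [this]
  -- φ s = a2/2 * s^2 + b * s + c
  have hC0 : ∀ s, φ s = a2 / 2 * s ^ 2 + b * s + c := by
    have key : ∀ s, HasDerivAt (fun t => φ t - (a2 / 2 * t ^ 2 + b * t)) 0 s := by
      intro s
      have hφ' : HasDerivAt φ (a2 * s + b) s := by
        have h := h1 s
        have hv : -deriv κ s / κ s ^ 2 = a2 * s + b := by
          rw [← (h1 s).deriv]; exact hC1 s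
        rwa [hv] at h
      have hp : HasDerivAt (fun t => a2 / 2 * t ^ 2 + b * t)
          (a2 / 2 * ((2 : ℕ) * s ^ (2 - 1) * 1) + b * 1) s :=
        (((hasDerivAt_id s).pow 2).const_mul (a2 / 2)).add ((hasDerivAt_id s).const_mul b)
      have := hφ'.sub hp
      refine this.congr_deriv ?_
      push_cast
      ring
    intro s
    have := is_const_of_deriv_eq_zero (fun t => (key t).differentiableAt)
      (fun t => (key t).deriv) s 0
    have h0 : φ 0 - (a2 / 2 * 0 ^ 2 + b * 0) = c := by simp [hc0]
    nlinarith [this, h0]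
  -- values of the constants
  have hk0 := hne 0
  have hb' : b = -deriv κ 0 / κ 0 ^ 2 := by rw [hb, hdφ]
  have ha2' : a2 = (deriv κ 0 ^ 2 + 4 * κ 0 ^ 4) / (2 * κ 0 ^ 3) := by rw [ha2, hddφ]
  have hc' : c = (κ 0)⁻¹ := rfl
  have ha2pos : 0 < a2 := by
    rw [ha2']
    have := hpos 0
    positivity
  -- the algebraic constraint 2 * a2 * c - b ^ 2 = 4
  have hconstraint : 2 * a2 * c = 4 + b ^ 2 := by
    rw [ha2', hb', hc']
    have := hpos 0
    field_simp
    ring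
  -- wrap up
  refine ⟨a2 / 2, b / a2, by positivity, fun s => ?_⟩
  have hφpos : 0 < φ s := by
    have := hpos s
    simp only [hφdef]
    positivity
  have hκφ : κ s = (φ s)⁻¹ := by
    simp only [hφdef, inv_inv]
  rw [hκφ, hC0 s]
  have hφs := hC0 s
  rw [hφs] at hφpos
  have hden : a2 / 2 * s ^ 2 + b * s + c ≠ 0 := ne_of_gt hφpos
  have hden2 : (a2 / 2) ^ 2 * (s + b / a2) ^ 2 + 1 ≠ 0 := by positivity
  have ha2ne : a2 ≠ 0 := ne_of_gt ha2pos
  have key : a2 / 2 * (a2 / 2 * s ^ 2 + b * s + c) = (a2 / 2) ^ 2 * (s + b / a2) ^ 2 + 1 := by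
    field_simp
    linear_combination hconstraint
  rw [← key, div_mul_cancel_left₀ (by positivity : (a2 / 2 : ℝ) ≠ 0)]
end

section
/- Let M be a Riemannian hypersurface with positive definite second fundamental form II(X,Y) = g(AX,Y), and suppose the Levi-Civita connections of g and II coincide. Then at any point p, for any g-orthonormal eigenbasis E₁,...,E_m of the shape operator A with eigenvalues λ₁,...,λ_m, the sectional curvature of II satisfies K^{II}(E_i,E_j) = (1/λ_i)·K(E_i,E_j) for all i ≠ j, where K is the sectional curvature of g. -/
open scoped RealInnerProductSpace

section

variable {F : Type*} [NormedAddCommGroup F] [InnerProductSpace ℝ F]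

theorem LinearMap.IsSymmetric.inner_apply_eigenvector {A : F →ₗ[ℝ] F} (hA : A.IsSymmetric)
    {v : F} {μ : ℝ} (hv : A v = μ • v) (x : F) : ⟪A x, v⟫ = μ * ⟪x, v⟫ := by
  rw [hA, hv, real_inner_smul_right]

theorem inner_apply_self_of_eigenvector_of_norm_eq_one {A : F →ₗ[ℝ] F} {v : F} {μ : ℝ}
    (hv : A v = μ • v) (hv₁ : ‖v‖ = 1) : ⟪A v, v⟫ = μ := by
  rw [hv, real_inner_smul_left, inner_self_eq_one_of_norm_eq_one hv₁, mul_one]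

end

/-- if the Levi-Civita connections of `g` and `II` coincide (so the curvature
tensors coincide: `R = R^{II}`, which is the common tensor `R` below, given vector-valued),
then for a `g`-orthonormal eigenbasis `E₁,…,E_m` of the positive definite symmetric shape
operator `A` with eigenvalues `λᵢ > 0`, the sectional curvature of `II`,
`K^{II}(Eᵢ,Eⱼ) = II(R(Eᵢ,Eⱼ)Eᵢ,Eⱼ)/(II(Eᵢ,Eᵢ)·II(Eⱼ,Eⱼ))`, equals `(1/λᵢ)·K(Eᵢ,Eⱼ)`
where `K(Eᵢ,Eⱼ) = ⟪R(Eᵢ,Eⱼ)Eᵢ, Eⱼ⟫` (the `g`-sectional curvature for orthonormal vectors). -/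
theorem stmt_6 {m : ℕ}
    (A : EuclideanSpace ℝ (Fin m) →ₗ[ℝ] EuclideanSpace ℝ (Fin m))
    (hA : ∀ x y : EuclideanSpace ℝ (Fin m), ⟪A x, y⟫ = ⟪x, A y⟫)
    (E : Fin m → EuclideanSpace ℝ (Fin m)) (hE : Orthonormal ℝ E)
    (lam : Fin m → ℝ) (hlam : ∀ i, 0 < lam i)
    (heig : ∀ i, A (E i) = lam i • E i)
    (R : EuclideanSpace ℝ (Fin m) → EuclideanSpace ℝ (Fin m) →
      EuclideanSpace ℝ (Fin m) → EuclideanSpace ℝ (Fin m)) :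
    ∀ i j, i ≠ j →
      ⟪A (R (E i) (E j) (E i)), E j⟫ / (⟪A (E i), E i⟫ * ⟪A (E j), E j⟫)
        = (1 / lam i) * ⟪R (E i) (E j) (E i), E j⟫ := by
  intro i j _
  have hII : ∀ k, ⟪A (E k), E k⟫ = lam k := fun k =>
    inner_apply_self_of_eigenvector_of_norm_eq_one (heig k) (hE.1 k)
  rw [LinearMap.IsSymmetric.inner_apply_eigenvector hA (heig j), hII, hII]
  have := (hlam j).ne'
  field_simp
end

section
/- Let (V, g) be an inner product space of dimension n = m+1 with 2 ≤ n ≤ 5, and let R be an algebraic curvature tensor on V with scalar curvature S = 0 and ‖R‖² = ‖Ric‖², where Ric is the Ricci contraction of R. Then R = 0. -/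
/-!
For `R` antisymmetric in both index pairs, with Ricci contraction `Ric` and scalar curvature `S`,
the identities `⟨R, h ⊙ g⟩ = 4⟨Ric R, h⟩` and `Ric (h ⊙ g) = (n - 2) h + (tr h) g` give
`‖3R - Ric ⊙ g‖² = 9‖R‖² + (4n - 32)‖Ric‖² + 4S²`.
When `S = 0` and `‖R‖² = ‖Ric‖²` the right-hand side is `(4n - 23)‖R‖²`, which is negative for
`n ≤ 5` unless `R = 0`. The weight `1/3` replaces the Weyl weight `1/(n - 2)` so that one
computation covers every `n ≤ 5`.
-/

open Finset

variable {ι : Type*}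

-- `h ⊙ g` for the Euclidean metric `g i j = if i = j then 1 else 0`
def kulkarniNomizu [DecidableEq ι] (h : ι → ι → ℝ) (i j k l : ι) : ℝ :=
  (if j = l then h i k else 0) - (if j = k then h i l else 0)
    + (if i = k then h j l else 0) - (if i = l then h j k else 0)

theorem kulkarniNomizu_antisymm_left [DecidableEq ι] (h : ι → ι → ℝ) (i j k l : ι) :
    kulkarniNomizu h i j k l = - kulkarniNomizu h j i k l := by
  simp only [kulkarniNomizu]; ring

theorem kulkarniNomizu_antisymm_right [DecidableEq ι] (h : ι → ι → ℝ) (i j k l : ι) :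
    kulkarniNomizu h i j k l = - kulkarniNomizu h i j l k := by
  simp only [kulkarniNomizu]; ring

variable [Fintype ι]

def ricci (R : ι → ι → ι → ι → ℝ) (i j : ι) : ℝ := ∑ k, R i k j k

theorem eq_zero_of_sum_sq_eq_zero {X : ι → ι → ι → ι → ℝ}
    (h : ∑ i, ∑ j, ∑ k, ∑ l, X i j k l ^ 2 = 0) : ∀ i j k l, X i j k l = 0 := by
  simpa (disch := intros; positivity) [sum_eq_zero_iff_of_nonneg] using h

theorem sum_mul_antisymmetrize {X : ι → ι → ι → ι → ℝ}
    (hX₁ : ∀ i j k l, X i j k l = - X j i k l) (hX₂ : ∀ i j k l, X i j k l = - X i j l k)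
    (f : ι → ι → ι → ι → ℝ) :
    ∑ i, ∑ j, ∑ k, ∑ l, X i j k l * (f i j k l - f i j l k + f j i l k - f j i k l)
      = 4 * ∑ i, ∑ j, ∑ k, ∑ l, X i j k l * f i j k l := by
  have swap_kl (g : ι → ι → ι → ι → ℝ) : ∑ i, ∑ j, ∑ k, ∑ l, X i j k l * g i j l k
      = - ∑ i, ∑ j, ∑ k, ∑ l, X i j k l * g i j k l := by
    simp only [← sum_neg_distrib]
    refine sum_congr rfl fun i _ => sum_congr rfl fun j _ => ?_
    rw [sum_comm]
    exact sum_congr rfl fun k _ => sum_congr rfl fun l _ => by rw [hX₂ i j l k]; ring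
  have swap_ij (g : ι → ι → ι → ι → ℝ) : ∑ i, ∑ j, ∑ k, ∑ l, X i j k l * g j i k l
      = - ∑ i, ∑ j, ∑ k, ∑ l, X i j k l * g i j k l := by
    simp only [← sum_neg_distrib]
    rw [sum_comm]
    exact sum_congr rfl fun i _ => sum_congr rfl fun j _ =>
      sum_congr rfl fun k _ => sum_congr rfl fun l _ => by rw [hX₁ j i k l]; ring
  simp only [mul_add, mul_sub, sum_add_distrib, sum_sub_distrib]
  rw [swap_kl f, swap_ij (fun i j k l => f i j l k), swap_kl f,
    swap_ij (fun i j k l => f i j k l)]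
  ring

variable [DecidableEq ι]

theorem sum_mul_kulkarniNomizu {X : ι → ι → ι → ι → ℝ}
    (hX₁ : ∀ i j k l, X i j k l = - X j i k l) (hX₂ : ∀ i j k l, X i j k l = - X i j l k)
    (h : ι → ι → ℝ) :
    ∑ i, ∑ j, ∑ k, ∑ l, X i j k l * kulkarniNomizu h i j k l
      = 4 * ∑ i, ∑ k, ricci X i k * h i k := by
  simp only [kulkarniNomizu]
  rw [sum_mul_antisymmetrize hX₁ hX₂ (fun i j k l => if j = l then h i k else 0)]
  congr 1
  refine sum_congr rfl fun i _ => ?_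
  rw [sum_comm]
  refine sum_congr rfl fun k _ => ?_
  simp [ricci, sum_mul, mul_ite]

theorem ricci_kulkarniNomizu (h : ι → ι → ℝ) (i k : ι) :
    ricci (kulkarniNomizu h) i k
      = (Fintype.card ι - 2) * h i k + if i = k then ∑ j, h j j else 0 := by
  simp only [ricci, kulkarniNomizu, sum_add_distrib, sum_sub_distrib]
  simp only [↓reduceIte, sum_const, card_univ, nsmul_eq_mul, sum_ite_eq, sum_ite_eq', mem_univ,
    sum_ite_irrel, mul_zero]
  ring

theorem sum_kulkarniNomizu_sq (h : ι → ι → ℝ) :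
    ∑ i, ∑ j, ∑ k, ∑ l, kulkarniNomizu h i j k l ^ 2
      = 4 * ((Fintype.card ι - 2) * ∑ i, ∑ k, h i k ^ 2 + (∑ i, h i i) ^ 2) := by
  simp only [sq]
  rw [sum_mul_kulkarniNomizu (kulkarniNomizu_antisymm_left h) (kulkarniNomizu_antisymm_right h)]
  simp only [ricci_kulkarniNomizu, add_mul, sum_add_distrib, ite_mul, zero_mul, sum_ite_eq,
    mem_univ, if_true, mul_assoc, ← mul_sum]

theorem sum_sq_three_mul_sub_kulkarniNomizu_ricci {R : ι → ι → ι → ι → ℝ}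
    (hR₁ : ∀ i j k l, R i j k l = - R j i k l) (hR₂ : ∀ i j k l, R i j k l = - R i j l k) :
    ∑ i, ∑ j, ∑ k, ∑ l, (3 * R i j k l - kulkarniNomizu (ricci R) i j k l) ^ 2
      = 9 * ∑ i, ∑ j, ∑ k, ∑ l, R i j k l ^ 2
        + (4 * Fintype.card ι - 32) * ∑ i, ∑ k, ricci R i k ^ 2 + 4 * (∑ i, ricci R i i) ^ 2 := by
  have expand : ∀ a b : ℝ, (3 * a - b) ^ 2 = 9 * a ^ 2 - 6 * (a * b) + b ^ 2 := fun a b => by ring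
  simp only [expand, sum_add_distrib, sum_sub_distrib, ← mul_sum]
  rw [sum_mul_kulkarniNomizu hR₁ hR₂, sum_kulkarniNomizu_sq]
  simp only [← sq]
  ring

theorem eq_zero_of_sum_sq_eq_sum_ricci_sq {R : ι → ι → ι → ι → ℝ}
    (hR₁ : ∀ i j k l, R i j k l = - R j i k l) (hR₂ : ∀ i j k l, R i j k l = - R i j l k)
    (hcard : Fintype.card ι ≤ 5) (hS : ∑ i, ricci R i i = 0)
    (hnorm : ∑ i, ∑ j, ∑ k, ∑ l, R i j k l ^ 2 = ∑ i, ∑ k, ricci R i k ^ 2) :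
    ∀ i j k l, R i j k l = 0 := by
  have sum_sq_nonneg (X : ι → ι → ι → ι → ℝ) : 0 ≤ ∑ i, ∑ j, ∑ k, ∑ l, X i j k l ^ 2 :=
    sum_nonneg fun _ _ => sum_nonneg fun _ _ => sum_nonneg fun _ _ => sum_nonneg fun _ _ =>
      sq_nonneg _
  have hW := sum_sq_nonneg fun i j k l => 3 * R i j k l - kulkarniNomizu (ricci R) i j k l
  have hQ := sum_sq_nonneg R
  have hn : 0 ≤ 5 - (Fintype.card ι : ℝ) := sub_nonneg.2 (by exact_mod_cast hcard)
  rw [sum_sq_three_mul_sub_kulkarniNomizu_ricci hR₁ hR₂, hS, ← hnorm] at hW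
  refine eq_zero_of_sum_sq_eq_zero (le_antisymm ?_ hQ)
  linarith [mul_nonneg hn hQ]

theorem stmt_9_general {n : ℕ} (hn2 : n ≤ 5)
    (R : Fin n → Fin n → Fin n → Fin n → ℝ)
    (hanti1 : ∀ i j k l, R i j k l = - R j i k l)
    (hanti2 : ∀ i j k l, R i j k l = - R i j l k)
    (hS : ∑ i, ∑ k, R i k i k = 0)
    (hnorm : ∑ i, ∑ j, ∑ k, ∑ l, (R i j k l) ^ 2
      = ∑ i, ∑ j, (∑ k, R i k j k) ^ 2) :
    ∀ i j k l, R i j k l = 0 :=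
  eq_zero_of_sum_sq_eq_sum_ricci_sq hanti1 hanti2 (by rwa [Fintype.card_fin]) hS hnorm

/-- An algebraic curvature tensor `R` (given by its components in an
orthonormal basis of an `n`-dimensional inner product space, `2 ≤ n ≤ 5`) with vanishing
scalar curvature `S = ∑ᵢₖ Rᵢₖᵢₖ` and `‖R‖² = ‖Ric‖²`, where `Ricᵢⱼ = ∑ₖ Rᵢₖⱼₖ`,
must vanish. -/
theorem stmt_9 {n : ℕ} (hn1 : 2 ≤ n) (hn2 : n ≤ 5)
    (R : Fin n → Fin n → Fin n → Fin n → ℝ)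
    (hanti1 : ∀ i j k l, R i j k l = - R j i k l)
    (hanti2 : ∀ i j k l, R i j k l = - R i j l k)
    (hpair : ∀ i j k l, R i j k l = R k l i j)
    (hbianchi : ∀ i j k l, R i j k l + R j k i l + R k i j l = 0)
    (hS : ∑ i, ∑ k, R i k i k = 0)
    (hnorm : ∑ i, ∑ j, ∑ k, ∑ l, (R i j k l) ^ 2
      = ∑ i, ∑ j, (∑ k, R i k j k) ^ 2) :
    ∀ i j k l, R i j k l = 0 :=
  stmt_9_general hn2 R hanti1 hanti2 hS hnorm
end
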